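/- With i.i.d. Exp(λ) interdistances, coverage radius R, and τ_n the hop lengths of the shortest path as above, the conditional CDF of τ_n given τ_{n-1} = x_{n-1} ≤ R satisfies: for R - x_{n-1} ≤ x_n ≤ R, F_{τ_n|τ_{n-1}}(x_n, x_{n-1}) = e^{-λ(R - x_n)} - e^{-λ x_{n-1}}, and for x_n ≥ R, F_{τ_n|τ_{n-1}}(x_n, x_{n-1}) = 1 - e^{-λ(x_n - (R - x_{n-1}))}. -/

import Mathlib

/-
Put `c = R - x_{n-1}`, so that the vehicles sit at `c + S_n` with `S_n` the partial sums of
i.i.d. `Exp(λ)` gaps. For `y ≥ R` the next hop is at most `y` exactly when the first vehicle is,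
which gives a shifted exponential CDF. For `c ≤ y ≤ R` the next hop is at most `y` exactly when
the walk `S`, which is almost surely nondecreasing and unbounded, jumps over `(y - c, R - c]`,
i.e. `S_n ≤ y - c < R - c < S_{n+1}` for one (unique) `n`.
Conditioning on `S_n`, that event has probability `e^{-λ(R-c)} (λ(y-c))^{n+1}/(n+1)!`, and the
exponential series sums these to `e^{-λ(R-c)} (e^{λ(y-c)} - 1)`.
-/

open MeasureTheory

/-- Position of the `n`-th vehicle: partial sum of the gaps. -/
def vehiclePos {Ω : Type*} (J : ℕ → Ω → ℝ) (n : ℕ) (ω : Ω) : ℝ :=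
  ∑ i ∈ Finset.range (n + 1), J i ω

open Classical in
/-- Next-hop distance for the shortest-path sampling rule: the farthest vehicle
within coverage `R` if there is one, else the first vehicle. -/
noncomputable def nextHop {Ω : Type*} (J : ℕ → Ω → ℝ) (R : ℝ) (ω : Ω) : ℝ :=
  if ∃ n, vehiclePos J n ω ≤ R then
    sSup {y | (∃ n, y = vehiclePos J n ω) ∧ y ≤ R}
  else vehiclePos J 0 ω

open ProbabilityTheory Real Set Filter
open scoped ENNReal Nat

section SamplePath

variable {Ω : Type*} {J : ℕ → Ω → ℝ} {ω : Ω} {R y : ℝ}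

lemma vehiclePos_zero : vehiclePos J 0 ω = J 0 ω := by
  simp [vehiclePos]

lemma vehiclePos_succ (n : ℕ) : vehiclePos J (n + 1) ω = vehiclePos J n ω + J (n + 1) ω :=
  Finset.sum_range_succ _ _

lemma vehiclePos_eq_const_add {I : ℕ → Ω → ℝ} {c : ℝ} (h0 : J 0 ω = c + I 0 ω)
    (hsucc : ∀ n, J (n + 1) ω = I (n + 1) ω) (n : ℕ) :
    vehiclePos J n ω = c + vehiclePos I n ω := by
  induction n with
  | zero => rw [vehiclePos_zero, vehiclePos_zero, h0]
  | succ n ih => rw [vehiclePos_succ, vehiclePos_succ, ih, hsucc, add_assoc]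

lemma le_vehiclePos (h : ∀ n, 0 ≤ J n ω) (n : ℕ) : J n ω ≤ vehiclePos J n ω :=
  Finset.single_le_sum (fun i _ => h i) (Finset.self_mem_range_succ n)

lemma monotone_vehiclePos (h : ∀ n, 0 ≤ J (n + 1) ω) : Monotone (vehiclePos J · ω) :=
  monotone_nat_of_le_succ fun n => by
    rw [vehiclePos_succ]
    linarith [h n]

lemma nextHop_le_iff_of_le (hy : y ≤ R) :
    nextHop J R ω ≤ y ↔
      (∃ n, vehiclePos J n ω ≤ y) ∧ ∀ n, vehiclePos J n ω ≤ R → vehiclePos J n ω ≤ y := by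
  have hbdd : BddAbove {z | (∃ n, z = vehiclePos J n ω) ∧ z ≤ R} := ⟨R, fun z hz => hz.2⟩
  unfold nextHop
  split_ifs with hex
  · constructor
    · intro h
      have hle : ∀ n, vehiclePos J n ω ≤ R → vehiclePos J n ω ≤ y := fun n hn =>
        (le_csSup hbdd ⟨⟨n, rfl⟩, hn⟩).trans h
      obtain ⟨n, hn⟩ := hex
      exact ⟨⟨n, hle n hn⟩, hle⟩
    · rintro ⟨⟨n, hn⟩, hle⟩
      exact csSup_le ⟨_, ⟨n, rfl⟩, hn.trans hy⟩ fun _ ⟨⟨m, hm⟩, hmR⟩ => hm ▸ hle m (hm ▸ hmR)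
  · simp only [not_exists, not_le] at hex
    exact iff_of_false (fun h => (hex 0).not_ge (h.trans hy))
      fun ⟨⟨n, hn⟩, _⟩ => (hex n).not_ge (hn.trans hy)

lemma nextHop_le_iff_of_ge (hmono : Monotone (vehiclePos J · ω)) (hy : R ≤ y) :
    nextHop J R ω ≤ y ↔ vehiclePos J 0 ω ≤ y := by
  unfold nextHop
  split_ifs with hex
  · obtain ⟨n, hn⟩ := hex
    exact iff_of_true (csSup_le ⟨_, ⟨n, rfl⟩, hn⟩ fun z hz => hz.2.trans hy)
      ((hmono n.zero_le).trans (hn.trans hy))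
  · rfl

lemma Monotone.exists_le_lt_succ_iff {p : ℕ → ℝ} (hp : Monotone p) {a b : ℝ}
    (hunb : ∃ n, a < p n) :
    ((∃ n, p n ≤ a) ∧ ∀ n, p n ≤ b → p n ≤ a) ↔ ∃ n, p n ≤ a ∧ b < p (n + 1) := by
  classical
  constructor
  · rintro ⟨⟨m, hm⟩, hle⟩
    have hfind : Nat.find hunb ≠ 0 := fun h0 =>
      (hp m.zero_le |>.trans hm).not_gt (h0 ▸ Nat.find_spec hunb)
    obtain ⟨n, hn⟩ := Nat.exists_eq_succ_of_ne_zero hfind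
    have hlt : a < p (n + 1) := by
      rw [← Nat.succ_eq_add_one, ← hn]
      exact Nat.find_spec hunb
    exact ⟨n, not_lt.1 (Nat.find_min hunb (by omega)),
      lt_of_not_ge fun h => (hle _ h).not_gt hlt⟩
  · rintro ⟨n, hn, hb⟩
    refine ⟨⟨n, hn⟩, fun m hm => ?_⟩
    rcases le_or_gt m n with hmn | hnm
    · exact (hp hmn).trans hn
    · exact absurd hm (not_le.2 (hb.trans_le (hp hnm)))

lemma Monotone.eq_of_le_lt_succ {p : ℕ → ℝ} (hp : Monotone p) {a b : ℝ} (hab : a ≤ b)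
    {m n : ℕ} (hm : p m ≤ a ∧ b < p (m + 1)) (hn : p n ≤ a ∧ b < p (n + 1)) : m = n := by
  by_contra hne
  rcases Nat.lt_or_gt_of_ne hne with h | h
  · linarith [hp (Nat.succ_le_of_lt h)]
  · linarith [hp (Nat.succ_le_of_lt h)]

lemma nextHop_le_iff_exists (hmono : Monotone (vehiclePos J · ω))
    (hunb : ∃ n, y < vehiclePos J n ω) (hy : y ≤ R) :
    nextHop J R ω ≤ y ↔ ∃ n, vehiclePos J n ω ≤ y ∧ R < vehiclePos J (n + 1) ω := by
  rw [nextHop_le_iff_of_le hy]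
  exact hmono.exists_le_lt_succ_iff hunb

end SamplePath

section Exponential

variable {lam : ℝ}

lemma expMeasure_Iic (hlam : 0 < lam) {x : ℝ} (hx : 0 ≤ x) :
    expMeasure lam (Iic x) = ENNReal.ofReal (1 - exp (-(lam * x))) := by
  have := isProbabilityMeasure_expMeasure hlam
  rw [← ofReal_cdf, cdf_expMeasure_eq hlam, if_pos hx]

lemma expMeasure_Iic_lt_one (hlam : 0 < lam) (x : ℝ) : expMeasure lam (Iic x) < 1 :=
  calc expMeasure lam (Iic x) ≤ expMeasure lam (Iic (max x 0)) :=
        measure_mono (Iic_subset_Iic.2 (le_max_left _ _))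
    _ < 1 := by
        rw [expMeasure_Iic hlam (le_max_right _ _)]
        exact ENNReal.ofReal_lt_one.2 (by linarith [exp_pos (-(lam * max x 0))])

lemma expMeasure_Ioi (hlam : 0 < lam) {x : ℝ} (hx : 0 ≤ x) :
    expMeasure lam (Ioi x) = ENNReal.ofReal (exp (-(lam * x))) := by
  have := isProbabilityMeasure_expMeasure hlam
  have hle : exp (-(lam * x)) ≤ 1 := exp_le_one_iff.2 (by nlinarith)
  rw [← compl_Iic, prob_compl_eq_one_sub measurableSet_Iic, expMeasure_Iic hlam hx,
    ← ENNReal.ofReal_one, ← ENNReal.ofReal_sub _ (sub_nonneg.2 hle), sub_sub_cancel]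

variable {Ω : Type*} [MeasurableSpace Ω] {μ : Measure Ω} {X : Ω → ℝ}

lemma map_eq_expMeasure_of_cdf [IsProbabilityMeasure μ] (hlam : 0 < lam) (hX : Measurable X)
    (hcdf : ∀ x, 0 ≤ x → (μ {ω | X ω ≤ x}).toReal = 1 - exp (-(lam * x))) :
    μ.map X = expMeasure lam := by
  have := isProbabilityMeasure_expMeasure hlam
  have := Measure.isProbabilityMeasure_map (μ := μ) hX.aemeasurable
  -- the CDF vanishes at `0`, hence on the negative half-line
  have hzero : μ {ω | X ω ≤ 0} = 0 :=
    ((ENNReal.toReal_eq_zero_iff _).1 (by simpa using hcdf 0 le_rfl)).resolve_right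
      (measure_ne_top _ _)
  refine Measure.eq_of_cdf _ _ (StieltjesFunction.ext fun x => ?_)
  rw [cdf_expMeasure_eq hlam, cdf_eq_real, measureReal_def, Measure.map_apply hX measurableSet_Iic]
  split_ifs with hx
  · exact hcdf x hx
  · rw [measure_mono_null (s := X ⁻¹' Iic x) (fun ω h => le_trans h (not_le.1 hx).le) hzero,
      ENNReal.toReal_zero]

lemma ae_pos_of_map_eq_expMeasure (hlam : 0 < lam) (hX : Measurable X)
    (hlaw : μ.map X = expMeasure lam) : ∀ᵐ ω ∂μ, 0 < X ω := by
  refine ae_of_ae_map hX.aemeasurable ?_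
  rw [hlaw, ae_iff]
  simp only [not_lt]
  exact (expMeasure_Iic hlam le_rfl).trans (by simp)

end Exponential

section ExpPowWeight

/-- Convolving with `Exp(λ)` raises `k` by one, so the integrals against the laws of the partial
sums are computed without their Gamma densities. -/
noncomputable def expPowWeight (lam t : ℝ) (k : ℕ) (s : ℝ) : ℝ≥0∞ :=
  if s ≤ t then ENNReal.ofReal ((lam * (t - s)) ^ k / k ! * exp (lam * s)) else 0

variable {lam : ℝ}

lemma measurable_expPowWeight (lam t : ℝ) (k : ℕ) : Measurable (expPowWeight lam t k) :=
  Measurable.ite measurableSet_Iic (by fun_prop) measurable_const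

lemma expPowWeight_zero_right (lam : ℝ) {t : ℝ} (ht : 0 ≤ t) (k : ℕ) :
    expPowWeight lam t k 0 = ENNReal.ofReal ((lam * t) ^ k / k !) := by
  simp [expPowWeight, ht]

lemma integral_mul_sub_pow_div_factorial (lam r : ℝ) (k : ℕ) :
    ∫ u in (0)..r, (lam * (r - u)) ^ k / k ! = lam ^ k * r ^ (k + 1) / (k + 1)! := by
  rw [intervalIntegral.integral_comp_sub_left (fun v => (lam * v) ^ k / k !) r]
  simp only [sub_self, sub_zero, mul_pow, intervalIntegral.integral_div,
    intervalIntegral.integral_const_mul, integral_pow]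
  rw [Nat.factorial_succ]
  push_cast
  field_simp
  ring

lemma exponentialPDF_mul_expPowWeight_add (hlam : 0 < lam) (t : ℝ) (k : ℕ) (s u : ℝ) :
    exponentialPDF lam u * expPowWeight lam t k (s + u) =
      (Icc 0 (t - s)).indicator
        (fun u => ENNReal.ofReal (lam * exp (lam * s) * ((lam * (t - s - u)) ^ k / k !))) u := by
  rcases lt_or_ge u 0 with hu | hu
  · simp [exponentialPDF_of_neg hu, hu.not_ge]
  by_cases hut : s + u ≤ t
  · rw [indicator_of_mem (show u ∈ Icc 0 (t - s) from ⟨hu, by linarith⟩), exponentialPDF_of_nonneg hu, expPowWeight,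
      if_pos hut, ← ENNReal.ofReal_mul (by positivity)]
    congr 1
    have : exp (-(lam * u)) * exp (lam * (s + u)) = exp (lam * s) := by
      rw [← exp_add]; ring_nf
    rw [show t - (s + u) = t - s - u by ring, ← this]
    ring
  · rw [indicator_of_notMem fun h => hut (by linarith [h.2]), expPowWeight, if_neg hut,
      mul_zero]

lemma lintegral_expPowWeight_add (hlam : 0 < lam) (t : ℝ) (k : ℕ) (s : ℝ) :
    ∫⁻ u, expPowWeight lam t k (s + u) ∂expMeasure lam = expPowWeight lam t (k + 1) s := by
  rw [show expMeasure lam = volume.withDensity (exponentialPDF lam) from rfl,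
    lintegral_withDensity_eq_lintegral_mul _
      (f := exponentialPDF lam) (measurable_exponentialPDFReal lam).ennreal_ofReal
      (g := fun u => expPowWeight lam t k (s + u))
      ((measurable_expPowWeight lam t k).comp (measurable_const_add s))]
  simp_rw [Pi.mul_apply, exponentialPDF_mul_expPowWeight_add hlam t k s]
  rw [lintegral_indicator measurableSet_Icc, expPowWeight]
  split_ifs with hst
  · have hr : 0 ≤ t - s := sub_nonneg.2 hst
    rw [← ofReal_integral_eq_lintegral_ofReal
        (Continuous.integrableOn_Icc (by fun_prop))
        ((ae_restrict_iff' measurableSet_Icc).2 (ae_of_all _ fun u hu => by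
          have := sub_nonneg.2 hu.2
          positivity)),
      integral_Icc_eq_integral_Ioc, ← intervalIntegral.integral_of_le hr,
      intervalIntegral.integral_const_mul, integral_mul_sub_pow_div_factorial]
    congr 1
    rw [mul_pow]
    ring
  · rw [Icc_eq_empty (by linarith), Measure.restrict_empty, lintegral_zero_measure]

lemma lintegral_expPowWeight_conv_expMeasure (hlam : 0 < lam) (ν : Measure ℝ) (t : ℝ) (k : ℕ) :
    ∫⁻ s, expPowWeight lam t k s ∂(ν ∗ expMeasure lam) =
      ∫⁻ s, expPowWeight lam t (k + 1) s ∂ν := by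
  have := isProbabilityMeasure_expMeasure hlam
  simp_rw [Measure.lintegral_conv (measurable_expPowWeight lam t k),
    lintegral_expPowWeight_add hlam]

end ExpPowWeight

section PartialSums

variable {Ω : Type*} [MeasurableSpace Ω] {μ : Measure Ω} {I : ℕ → Ω → ℝ} {lam : ℝ}

lemma measurable_vehiclePos (hI : ∀ n, Measurable (I n)) (n : ℕ) :
    Measurable (vehiclePos I n) :=
  Finset.measurable_sum _ fun i _ => hI i

lemma indepFun_vehiclePos_succ (hI : ∀ n, Measurable (I n)) (hindep : iIndepFun I μ) (n : ℕ) :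
    IndepFun (vehiclePos I n) (I (n + 1)) μ := by
  convert hindep.indepFun_finsetSum_of_notMem hI (Finset.notMem_range_self (n := n + 1))
  ext ω
  simp [vehiclePos]

lemma map_vehiclePos_succ [IsFiniteMeasure μ] (hI : ∀ n, Measurable (I n))
    (hindep : iIndepFun I μ) (n : ℕ) :
    μ.map (vehiclePos I (n + 1)) = μ.map (vehiclePos I n) ∗ μ.map (I (n + 1)) := by
  rw [show vehiclePos I (n + 1) = vehiclePos I n + I (n + 1) from funext fun _ => vehiclePos_succ n,
    (indepFun_vehiclePos_succ hI hindep n).map_add_eq_map_conv_map (measurable_vehiclePos hI n)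
      (hI _)]

lemma lintegral_expPowWeight_map_vehiclePos [IsFiniteMeasure μ] (hlam : 0 < lam)
    (hI : ∀ n, Measurable (I n)) (hindep : iIndepFun I μ)
    (hlaw : ∀ n, μ.map (I n) = expMeasure lam) {t : ℝ} (ht : 0 ≤ t) (n k : ℕ) :
    ∫⁻ s, expPowWeight lam t k s ∂(μ.map (vehiclePos I n)) =
      ENNReal.ofReal ((lam * t) ^ (n + k + 1) / (n + k + 1)!) := by
  induction n generalizing k with
  | zero =>
    have h0 : vehiclePos I 0 = I 0 := funext fun _ => vehiclePos_zero
    have hadd := lintegral_expPowWeight_add hlam t k 0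
    simp only [zero_add] at hadd ⊢
    rw [h0, hlaw, hadd, expPowWeight_zero_right lam ht]
  | succ n ih =>
    rw [map_vehiclePos_succ hI hindep, hlaw, lintegral_expPowWeight_conv_expMeasure hlam, ih,
      show n + (k + 1) + 1 = n + 1 + k + 1 by ring]

lemma measure_vehiclePos_le_lt_succ [IsFiniteMeasure μ] (hlam : 0 < lam)
    (hI : ∀ n, Measurable (I n)) (hindep : iIndepFun I μ)
    (hlaw : ∀ n, μ.map (I n) = expMeasure lam) {a b : ℝ} (ha : 0 ≤ a) (hab : a ≤ b) (n : ℕ) :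
    μ {ω | vehiclePos I n ω ≤ a ∧ b < vehiclePos I (n + 1) ω} =
      ENNReal.ofReal (exp (-(lam * b)) * ((lam * a) ^ (n + 1) / (n + 1)!)) := by
  have := isProbabilityMeasure_expMeasure hlam
  set T : Set (ℝ × ℝ) := {p | p.1 ≤ a ∧ b < p.1 + p.2}
  have hT : MeasurableSet T := (measurableSet_le measurable_fst measurable_const).inter
    (measurableSet_lt measurable_const (measurable_fst.add measurable_snd))
  have hpair := measurable_vehiclePos hI n |>.prodMk (hI (n + 1))
  have hlaw_pair : μ.map (fun ω => (vehiclePos I n ω, I (n + 1) ω)) =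
      (μ.map (vehiclePos I n)).prod (expMeasure lam) := by
    rw [← hlaw (n + 1)]
    exact (indepFun_iff_map_prod_eq_prod_map_map hpair.fst.aemeasurable
      hpair.snd.aemeasurable).1 (indepFun_vehiclePos_succ hI hindep n)
  -- given the position `s ≤ a`, the next gap must exceed `b - s ≥ 0`
  have hslice : ∀ s, expMeasure lam (Prod.mk s ⁻¹' T) =
      ENNReal.ofReal (exp (-(lam * b))) * expPowWeight lam a 0 s := by
    intro s
    by_cases hsa : s ≤ a
    · have hset : Prod.mk s ⁻¹' T = Ioi (b - s) := by
        ext u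
        simp only [T, mem_preimage, mem_ofPred_eq, mem_Ioi, hsa, true_and]
        constructor <;> intro <;> linarith
      rw [hset, expMeasure_Ioi hlam (by linarith), expPowWeight, if_pos hsa,
        ← ENNReal.ofReal_mul (exp_pos _).le, pow_zero, Nat.factorial_zero, Nat.cast_one, div_one,
        one_mul, ← exp_add]
      ring_nf
    · have hset : Prod.mk s ⁻¹' T = ∅ := by
        ext u
        simp [T, hsa]
      rw [hset, measure_empty, expPowWeight, if_neg hsa, mul_zero]
  calc μ {ω | vehiclePos I n ω ≤ a ∧ b < vehiclePos I (n + 1) ω}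
      = μ.map (fun ω => (vehiclePos I n ω, I (n + 1) ω)) T := by
        rw [Measure.map_apply hpair hT]
        simp only [T, preimage_ofPred_eq, vehiclePos_succ]
    _ = ENNReal.ofReal (exp (-(lam * b))) *
          ∫⁻ s, expPowWeight lam a 0 s ∂(μ.map (vehiclePos I n)) := by
        rw [hlaw_pair, Measure.prod_apply hT, lintegral_congr hslice,
          lintegral_const_mul _ (measurable_expPowWeight lam a 0)]
    _ = _ := by
        rw [lintegral_expPowWeight_map_vehiclePos hlam hI hindep hlaw ha, ← ENNReal.ofReal_mul
          (exp_pos _).le, add_zero]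

end PartialSums

lemma Real.hasSum_pow_succ_div_factorial (x : ℝ) :
    HasSum (fun n : ℕ => x ^ (n + 1) / (n + 1)!) (exp x - 1) := by
  have h := NormedSpace.expSeries_div_hasSum_exp x
  rw [← Real.exp_eq_exp_ℝ] at h
  simpa using (hasSum_nat_add_iff' 1).2 h

lemma ProbabilityTheory.iIndepFun.measure_forall_le_eq_zero {Ω : Type*} [MeasurableSpace Ω]
    {μ : Measure Ω} {I : ℕ → Ω → ℝ} (hindep : iIndepFun I μ) {a : ℝ} {q : ℝ≥0∞}
    (hle : ∀ i, μ {ω | I i ω ≤ a} ≤ q) (hq : q < 1) : μ {ω | ∀ i, I i ω ≤ a} = 0 := by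
  refine le_zero_iff.1
    (ge_of_tendsto' (ENNReal.tendsto_pow_atTop_nhds_zero_of_lt_one hq) fun n => ?_)
  calc μ {ω | ∀ i, I i ω ≤ a} ≤ μ (⋂ i ∈ Finset.range n, {ω | I i ω ≤ a}) :=
        measure_mono fun ω h => mem_iInter₂.2 fun i _ => h i
    _ = ∏ i ∈ Finset.range n, μ {ω | I i ω ≤ a} :=
        hindep.meas_biInter fun i _ => ⟨Iic a, measurableSet_Iic, rfl⟩
    _ ≤ q ^ n := by simpa using Finset.prod_le_pow_card (Finset.range n) _ _ fun i _ => hle i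

section ExponentialGaps

variable {Ω : Type*} [MeasurableSpace Ω] {μ : Measure Ω} {I : ℕ → Ω → ℝ} {lam : ℝ}

lemma ae_monotone_vehiclePos (hlam : 0 < lam) (hI : ∀ n, Measurable (I n))
    (hlaw : ∀ n, μ.map (I n) = expMeasure lam) : ∀ᵐ ω ∂μ, Monotone (vehiclePos I · ω) := by
  filter_upwards [ae_all_iff.2 fun n => ae_pos_of_map_eq_expMeasure hlam (hI n) (hlaw n)]
    with ω hω
  exact monotone_vehiclePos fun n => (hω (n + 1)).le

lemma ae_exists_lt_vehiclePos (hlam : 0 < lam) (hI : ∀ n, Measurable (I n))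
    (hindep : iIndepFun I μ) (hlaw : ∀ n, μ.map (I n) = expMeasure lam) (a : ℝ) :
    ∀ᵐ ω ∂μ, ∃ n, a < vehiclePos I n ω := by
  have hnull : μ {ω | ∀ i, I i ω ≤ a} = 0 := by
    refine hindep.measure_forall_le_eq_zero (fun i => le_of_eq ?_) (expMeasure_Iic_lt_one hlam a)
    rw [← hlaw i, Measure.map_apply (hI i) measurableSet_Iic]
    rfl
  filter_upwards [ae_all_iff.2 fun n => ae_pos_of_map_eq_expMeasure hlam (hI n) (hlaw n),
    measure_eq_zero_iff_ae_notMem.1 hnull] with ω hpos hnot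
  by_contra! h
  exact hnot fun i => (le_vehiclePos (fun n => (hpos n).le) i).trans (h i)

variable {J : ℕ → Ω → ℝ} {c R y : ℝ}

lemma measure_nextHop_le_of_ge (hlam : 0 < lam) (hI : ∀ n, Measurable (I n))
    (hlaw : ∀ n, μ.map (I n) = expMeasure lam)
    (hJ : ∀ n ω, vehiclePos J n ω = c + vehiclePos I n ω) (hRy : R ≤ y) (hcy : c ≤ y) :
    μ {ω | nextHop J R ω ≤ y} = ENNReal.ofReal (1 - exp (-(lam * (y - c)))) := by
  have hE : {ω | nextHop J R ω ≤ y} =ᵐ[μ] {ω | I 0 ω ≤ y - c} := by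
    refine eventuallyEq_set.2 ?_
    filter_upwards [ae_monotone_vehiclePos hlam hI hlaw] with ω hmono
    have hmonoJ : Monotone (vehiclePos J · ω) := by
      simpa only [hJ] using hmono.const_add c
    rw [nextHop_le_iff_of_ge hmonoJ hRy, hJ, vehiclePos_zero,
      le_sub_iff_add_le']
  calc μ {ω | nextHop J R ω ≤ y} = μ.map (I 0) (Iic (y - c)) := by
        rw [measure_congr hE, Measure.map_apply (hI 0) measurableSet_Iic]
        rfl
    _ = _ := by rw [hlaw, expMeasure_Iic hlam (sub_nonneg.2 hcy)]

lemma measure_nextHop_le_of_le [IsFiniteMeasure μ] (hlam : 0 < lam) (hI : ∀ n, Measurable (I n))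
    (hindep : iIndepFun I μ) (hlaw : ∀ n, μ.map (I n) = expMeasure lam)
    (hJ : ∀ n ω, vehiclePos J n ω = c + vehiclePos I n ω) (hcy : c ≤ y) (hyR : y ≤ R) :
    μ {ω | nextHop J R ω ≤ y} =
      ENNReal.ofReal (exp (-(lam * (R - y))) - exp (-(lam * (R - c)))) := by
  set E : ℕ → Set Ω := fun n => {ω | vehiclePos I n ω ≤ y - c ∧ R - c < vehiclePos I (n + 1) ω}
  have hE : {ω | nextHop J R ω ≤ y} =ᵐ[μ] ⋃ n, E n := by
    refine eventuallyEq_set.2 ?_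
    filter_upwards [ae_monotone_vehiclePos hlam hI hlaw,
      ae_exists_lt_vehiclePos hlam hI hindep hlaw (y - c)] with ω hmono ⟨m, hm⟩
    have hmonoJ : Monotone (vehiclePos J · ω) := by
      simpa only [hJ] using hmono.const_add c
    rw [nextHop_le_iff_exists hmonoJ ⟨m, by rw [hJ]; linarith⟩ hyR, mem_iUnion]
    simp only [E, mem_ofPred_eq, hJ, le_sub_iff_add_le', sub_lt_iff_lt_add']
  have hdisj : Pairwise (Function.onFun (AEDisjoint μ) E) := fun m n hmn =>
    measure_eq_zero_iff_ae_notMem.2 <| by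
      filter_upwards [ae_monotone_vehiclePos hlam hI hlaw] with ω hmono hω
      exact hmn (hmono.eq_of_le_lt_succ (by linarith) hω.1 hω.2)
  have hmeas : ∀ n, MeasurableSet (E n) := fun n =>
    (measurableSet_le (measurable_vehiclePos hI n) measurable_const).inter
      (measurableSet_lt measurable_const (measurable_vehiclePos hI (n + 1)))
  have hx : 0 ≤ lam * (y - c) := mul_nonneg hlam.le (sub_nonneg.2 hcy)
  have hsum := (Real.hasSum_pow_succ_div_factorial (lam * (y - c))).mul_left (exp (-(lam * (R - c))))
  calc μ {ω | nextHop J R ω ≤ y} = ∑' n, μ (E n) := by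
        rw [measure_congr hE, measure_iUnion₀ hdisj fun n => (hmeas n).nullMeasurableSet]
    _ = ∑' n : ℕ, ENNReal.ofReal
          (exp (-(lam * (R - c))) * ((lam * (y - c)) ^ (n + 1) / (n + 1)!)) :=
        tsum_congr <| measure_vehiclePos_le_lt_succ hlam hI hindep hlaw (sub_nonneg.2 hcy)
          (by linarith)
    _ = ENNReal.ofReal (exp (-(lam * (R - c))) * (exp (lam * (y - c)) - 1)) := by
        rw [← ENNReal.ofReal_tsum_of_nonneg (fun n => by positivity) hsum.summable, hsum.tsum_eq]
    _ = _ := by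
        rw [mul_sub, mul_one, ← exp_add]
        ring_nf

end ExponentialGaps

theorem stmt14_general {Ω : Type*} [MeasurableSpace Ω] (μ : Measure Ω) [IsProbabilityMeasure μ]
    (lam R xp : ℝ) (hlam : 0 < lam) (hxp0 : 0 ≤ xp)
    (I : ℕ → Ω → ℝ) (hmeas : ∀ n, Measurable (I n))
    (hindep : ProbabilityTheory.iIndepFun I μ)
    (hCDF : ∀ n, ∀ x : ℝ, 0 ≤ x →
      (μ {ω | I n ω ≤ x}).toReal = 1 - Real.exp (-(lam * x)))
    (J : ℕ → Ω → ℝ)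
    (hJ : ∀ ω, J 0 ω = (R - xp) + I 0 ω) (hJ' : ∀ n ω, J (n + 1) ω = I (n + 1) ω) :
    (∀ y : ℝ, R - xp ≤ y → y ≤ R →
      (μ {ω | nextHop J R ω ≤ y}).toReal
        = Real.exp (-(lam * (R - y))) - Real.exp (-(lam * xp)))
    ∧ (∀ y : ℝ, R ≤ y →
      (μ {ω | nextHop J R ω ≤ y}).toReal
        = 1 - Real.exp (-(lam * (y - (R - xp))))) := by
  have hlaw : ∀ n, μ.map (I n) = expMeasure lam := fun n =>
    map_eq_expMeasure_of_cdf hlam (hmeas n) (hCDF n)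
  have hpos : ∀ n ω, vehiclePos J n ω = (R - xp) + vehiclePos I n ω := fun n ω =>
    vehiclePos_eq_const_add (hJ ω) (fun n => hJ' n ω) n
  refine ⟨fun y hy hyR => ?_, fun y hy => ?_⟩
  · rw [measure_nextHop_le_of_le hlam hmeas hindep hlaw hpos hy hyR, sub_sub_cancel,
      ENNReal.toReal_ofReal (sub_nonneg.2 (exp_le_exp.2 (by nlinarith)))]
  · rw [measure_nextHop_le_of_ge hlam hmeas hlaw hpos hy (by linarith),
      ENNReal.toReal_ofReal (sub_nonneg.2 (exp_le_one_iff.2 (by nlinarith)))]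

/-- Conditional CDF of the next hop `τ_n` given the previous hop `τ_{n-1} = x_{n-1} ≤ R`
in the Poisson model: given the previous hop, the first gap ahead is (by memorylessness)
`(R - x_{n-1})` plus a fresh `Exp(λ)` variable, the later gaps are i.i.d. `Exp(λ)`, and
then `F_{τ_n|τ_{n-1}}(x_n, x_{n-1}) = e^{-λ(R-x_n)} - e^{-λ x_{n-1}}` for
`R - x_{n-1} ≤ x_n ≤ R`, while `F_{τ_n|τ_{n-1}}(x_n, x_{n-1}) = 1 - e^{-λ(x_n-(R-x_{n-1}))}`
for `x_n ≥ R`. -/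
theorem stmt14 {Ω : Type*} [MeasurableSpace Ω] (μ : Measure Ω) [IsProbabilityMeasure μ]
    (lam R xp : ℝ) (hlam : 0 < lam) (hR : 0 < R) (hxp0 : 0 ≤ xp) (hxpR : xp ≤ R)
    (I : ℕ → Ω → ℝ) (hmeas : ∀ n, Measurable (I n))
    (hindep : ProbabilityTheory.iIndepFun I μ)
    (hCDF : ∀ n, ∀ x : ℝ, 0 ≤ x →
      (μ {ω | I n ω ≤ x}).toReal = 1 - Real.exp (-(lam * x)))
    (hCDFneg : ∀ n, ∀ x : ℝ, x < 0 → μ {ω | I n ω ≤ x} = 0)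
    (J : ℕ → Ω → ℝ)
    (hJ : ∀ ω, J 0 ω = (R - xp) + I 0 ω) (hJ' : ∀ n ω, J (n + 1) ω = I (n + 1) ω) :
    (∀ y : ℝ, R - xp ≤ y → y ≤ R →
      (μ {ω | nextHop J R ω ≤ y}).toReal
        = Real.exp (-(lam * (R - y))) - Real.exp (-(lam * xp)))
    ∧ (∀ y : ℝ, R ≤ y →
      (μ {ω | nextHop J R ω ≤ y}).toReal
        = 1 - Real.exp (-(lam * (y - (R - xp))))) :=
  stmt14_general μ lam R xp hlam hxp0 I hmeas hindep hCDF J hJ hJ'
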